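/- Let p be a complex number with 0 < |p| < 1. Then Σ_{k∈ℤ} p^{|k|} · [(p^{3+3|k|}, p²; p³)_∞ / (p³, p^{1+3|k|}; p³)_∞] · ₂φ₁(p^{1+3|k|}, p; p^{3+3|k|}; p³, p²) = [(p²;p³)_∞/(p;p³)_∞]³. (With q = p³ this is the equality I_{e,N_f=1} = I_{m,N_f=1} of superconformal indices for the N=2 U(1) theory with one flavour of R-charge 1/3 and its mirror free theory of the meson M and the two singlets V_±.) -/

import Mathlib

/-!
Put `q = p³` and `c n = (p;q)_n / (q;q)_n`. Splitting the finite Pochhammer symbols at `|k|`, the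
`k`-th summand becomes `C * ∑ n, c n p^n * c (n + |k|) p^(n + |k|)` with
`C = (p²;q)_∞ / (p;q)_∞`. The pairs `(n, n + k)` for `k ≥ 0` and `(n - k, n)` for `k < 0` run
through `ℕ × ℕ` exactly once, so the sum is `C * (∑ n, c n p^n)²`. Finally the q-binomial theorem
`∑ n, (a;q)_n / (q;q)_n * z^n = (az;q)_∞ / (z;q)_∞`, here at `a = z = p`, gives `∑ n, c n p^n = C`;
it follows by iterating `(1 - z) φ(z) = (1 - az) φ(qz)` and letting `z q^N → 0`.
-/

open scoped BigOperators

/-- The infinite q-Pochhammer symbol `(z;q)_∞ = ∏_{j=0}^∞ (1 - z q^j)`. -/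
noncomputable def qPochInf (z q : ℂ) : ℂ := ∏' j : ℕ, (1 - z * q ^ j)

/-- The q-Pochhammer symbol `(z;q)_n = (z;q)_∞ / (z q^n;q)_∞` for `n : ℤ`. -/
noncomputable def qPochInt (z q : ℂ) (n : ℤ) : ℂ :=
  qPochInf z q / qPochInf (z * q ^ n) q

/-- The basic hypergeometric series `₂φ₁(A,B;C;q,Z)`. -/
noncomputable def phi21 (A B C q Z : ℂ) : ℂ :=
  ∑' n : ℕ, (qPochInt A q n * qPochInt B q n) /
    (qPochInt q q n * qPochInt C q n) * Z ^ n

open Filter Topology Finset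

noncomputable def qPochFin (a q : ℂ) (n : ℕ) : ℂ := ∏ j ∈ range n, (1 - a * q ^ j)

section QPochhammer

variable {a q : ℂ}

lemma norm_mul_pow_lt_one (ha : ‖a‖ < 1) (hq : ‖q‖ ≤ 1) (j : ℕ) : ‖a * q ^ j‖ < 1 := by
  rw [norm_mul, norm_pow]
  exact (mul_le_of_le_one_right (norm_nonneg a) (pow_le_one₀ (norm_nonneg q) hq)).trans_lt ha

lemma mul_pow_ne_one (ha : ‖a‖ < 1) (hq : ‖q‖ ≤ 1) (j : ℕ) : a * q ^ j ≠ 1 := by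
  intro h
  simpa [h] using norm_mul_pow_lt_one ha hq j

lemma summable_norm_mul_pow (a : ℂ) (hq : ‖q‖ < 1) : Summable fun j : ℕ => ‖a * q ^ j‖ := by
  simpa [norm_mul, norm_pow] using (summable_geometric_of_lt_one (norm_nonneg q) hq).mul_left ‖a‖

lemma multipliable_one_sub_mul_pow (a : ℂ) (hq : ‖q‖ < 1) :
    Multipliable fun j : ℕ => 1 - a * q ^ j := by
  simpa [sub_eq_add_neg] using
    Complex.multipliable_one_add_of_summable (summable_norm_mul_pow a hq).of_norm.neg

lemma qPochInf_ne_zero (hq : ‖q‖ < 1) (ha : ∀ j : ℕ, a * q ^ j ≠ 1) : qPochInf a q ≠ 0 := by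
  simpa [qPochInf, sub_eq_add_neg] using tprod_one_add_ne_zero_of_summable
    (f := fun j : ℕ => -(a * q ^ j))
    (fun j => by simpa [← sub_eq_add_neg, sub_eq_zero] using (ha j).symm)
    (by simpa using summable_norm_mul_pow a hq)

lemma qPochFin_ne_zero (ha : ∀ j : ℕ, a * q ^ j ≠ 1) (n : ℕ) : qPochFin a q n ≠ 0 :=
  prod_ne_zero_iff.mpr fun j _ => sub_ne_zero.mpr (ha j).symm

lemma qPochFin_succ (a q : ℂ) (n : ℕ) : qPochFin a q (n + 1) = qPochFin a q n * (1 - a * q ^ n) :=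
  prod_range_succ _ n

lemma qPochFin_add (a q : ℂ) (m n : ℕ) :
    qPochFin a q (m + n) = qPochFin a q m * qPochFin (a * q ^ m) q n := by
  simp only [qPochFin, prod_range_add, pow_add, mul_assoc]

lemma tendsto_qPochFin (a : ℂ) (hq : ‖q‖ < 1) :
    Tendsto (qPochFin a q) atTop (𝓝 (qPochInf a q)) :=
  (multipliable_one_sub_mul_pow a hq).hasProd.tendsto_prod_nat

lemma qPochInf_eq_qPochFin_mul (a : ℂ) (hq : ‖q‖ < 1) (n : ℕ) :
    qPochInf a q = qPochFin a q n * qPochInf (a * q ^ n) q := by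
  have h : Multipliable fun j => 1 - a * q ^ (j + n) :=
    (multipliable_one_sub_mul_pow (a * q ^ n) hq).congr fun j => by ring
  rw [qPochInf, ← Multipliable.prod_mul_tprod_nat_mul' (f := fun j => 1 - a * q ^ j) h]
  exact congrArg _ (tprod_congr fun j => by ring)

lemma qPochInt_natCast (hq : ‖q‖ < 1) {n : ℕ} (h : qPochInf (a * q ^ n) q ≠ 0) :
    qPochInt a q n = qPochFin a q n := by
  rw [qPochInt, zpow_natCast, qPochInf_eq_qPochFin_mul a hq n, mul_div_cancel_right₀ _ h]

end QPochhammer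

noncomputable def phi10Coeff (a q : ℂ) (n : ℕ) : ℂ := qPochFin a q n / qPochFin q q n

noncomputable def phi10 (a q z : ℂ) : ℂ := ∑' n : ℕ, phi10Coeff a q n * z ^ n

section QBinomial

variable {a q z : ℂ}

lemma phi10Coeff_succ_mul (a : ℂ) (hq : ‖q‖ < 1) (n : ℕ) :
    phi10Coeff a q (n + 1) * (1 - q * q ^ n) = phi10Coeff a q n * (1 - a * q ^ n) := by
  have hn : 1 - q * q ^ n ≠ 0 := sub_ne_zero.mpr (mul_pow_ne_one hq hq.le n).symm
  rw [phi10Coeff, phi10Coeff, qPochFin_succ, qPochFin_succ, div_mul_eq_mul_div,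
    mul_div_mul_right _ _ hn, mul_div_right_comm]

lemma exists_norm_phi10Coeff_le (a : ℂ) (hq : ‖q‖ < 1) : ∃ C, ∀ n, ‖phi10Coeff a q n‖ ≤ C := by
  have hlim : Tendsto (phi10Coeff a q) atTop (𝓝 (qPochInf a q / qPochInf q q)) :=
    (tendsto_qPochFin a hq).div (tendsto_qPochFin q hq)
      (qPochInf_ne_zero hq (mul_pow_ne_one hq hq.le))
  obtain ⟨C, hC⟩ := hlim.norm.bddAbove_range
  exact ⟨C, fun n => hC ⟨n, rfl⟩⟩

lemma summable_norm_phi10Coeff_mul_pow (a : ℂ) (hq : ‖q‖ < 1) (hz : ‖z‖ < 1) :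
    Summable fun n => ‖phi10Coeff a q n * z ^ n‖ := by
  obtain ⟨C, hC⟩ := exists_norm_phi10Coeff_le a hq
  refine Summable.of_nonneg_of_le (fun n => norm_nonneg _) (fun n => ?_)
    ((summable_geometric_of_lt_one (norm_nonneg z) hz).mul_left C)
  rw [norm_mul, norm_pow]
  exact mul_le_mul_of_nonneg_right (hC n) (by positivity)

lemma phi10_zero (a q : ℂ) : phi10 a q 0 = 1 := by
  rw [phi10, tsum_eq_single 0 fun n hn => by simp [zero_pow hn]]
  simp [phi10Coeff, qPochFin]

lemma tendsto_phi10_nhds_zero (a : ℂ) (hq : ‖q‖ < 1) : Tendsto (phi10 a q) (𝓝 0) (𝓝 1) := by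
  obtain ⟨C, hC⟩ := exists_norm_phi10Coeff_le a hq
  rw [← phi10_zero a q]
  refine tendsto_tsum_of_dominated_convergence (bound := fun n => C * (1 / 2) ^ n)
    (summable_geometric_two.mul_left C)
    (fun n => (continuous_const.mul (continuous_pow n)).tendsto 0) ?_
  filter_upwards [Metric.closedBall_mem_nhds (0 : ℂ) one_half_pos] with w hw n
  rw [mem_closedBall_zero_iff] at hw
  rw [norm_mul, norm_pow]
  exact mul_le_mul (hC n) (pow_le_pow_left₀ (norm_nonneg w) hw n) (by positivity)
    ((norm_nonneg _).trans (hC n))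

lemma phi10_functional_eq (a : ℂ) (hq : ‖q‖ < 1) (hz : ‖z‖ < 1) :
    (1 - z) * phi10 a q z = (1 - a * z) * phi10 a q (q * z) := by
  have hs := (summable_norm_phi10Coeff_mul_pow a hq hz).of_norm
  have hs' := (summable_norm_phi10Coeff_mul_pow a hq
    (by rw [norm_mul]; exact mul_lt_one_of_nonneg_of_lt_one_left (norm_nonneg q) hq hz.le)).of_norm
  have htel : phi10 a q z - phi10 a q (q * z) = z * phi10 a q z - a * z * phi10 a q (q * z) := by
    rw [phi10, phi10, ← hs.tsum_sub hs', (hs.sub hs').tsum_eq_zero_add, ← tsum_mul_left,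
      ← tsum_mul_left, ← (hs.mul_left z).tsum_sub (hs'.mul_left (a * z))]
    simp only [pow_zero, mul_one, sub_self, zero_add]
    exact tsum_congr fun n => by linear_combination z ^ (n + 1) * phi10Coeff_succ_mul a hq n
  linear_combination htel

lemma qPochFin_mul_phi10 (a : ℂ) (hq : ‖q‖ < 1) (hz : ‖z‖ < 1) (N : ℕ) :
    qPochFin z q N * phi10 a q z = qPochFin (a * z) q N * phi10 a q (z * q ^ N) := by
  induction N with
  | zero => simp [qPochFin]
  | succ N ih =>
    have h := phi10_functional_eq a hq (norm_mul_pow_lt_one hz hq.le N)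
    rw [show q * (z * q ^ N) = z * q ^ (N + 1) by ring] at h
    rw [qPochFin_succ, qPochFin_succ]
    linear_combination (1 - z * q ^ N) * ih + qPochFin (a * z) q N * h

theorem phi10_eq_qPochInf_div (a : ℂ) (hq : ‖q‖ < 1) (hz : ‖z‖ < 1) :
    phi10 a q z = qPochInf (a * z) q / qPochInf z q := by
  have hzq : Tendsto (fun N : ℕ => z * q ^ N) atTop (𝓝 0) := by
    simpa using (tendsto_pow_atTop_nhds_zero_of_norm_lt_one hq).const_mul z
  have hlim := ((tendsto_qPochFin (a * z) hq).mul ((tendsto_phi10_nhds_zero a hq).comp hzq)).congr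
    fun N => (qPochFin_mul_phi10 a hq hz N).symm
  rw [mul_one] at hlim
  rw [eq_div_iff (qPochInf_ne_zero hq (mul_pow_ne_one hz hq.le)), mul_comm,
    tendsto_nhds_unique ((tendsto_qPochFin z hq).mul_const _) hlim]

end QBinomial

lemma mul_phi21_eq_tsum_phi10Coeff_mul (a z : ℂ) {q : ℂ} (ha : ‖a‖ < 1) (hq : ‖q‖ < 1) (m : ℕ) :
    z ^ m * (qPochInf (q * q ^ m) q * qPochInf (a * z) q) /
        (qPochInf q q * qPochInf (a * q ^ m) q) *
        phi21 (a * q ^ m) a (q * q ^ m) q (z ^ 2) =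
      qPochInf (a * z) q / qPochInf a q *
        ∑' n : ℕ, phi10Coeff a q n * z ^ n * (phi10Coeff a q (n + m) * z ^ (n + m)) := by
  have hne : ∀ {b : ℂ}, ‖b‖ < 1 → ∀ k : ℕ, qPochInf (b * q ^ k) q ≠ 0 := fun hb k =>
    qPochInf_ne_zero hq (mul_pow_ne_one (norm_mul_pow_lt_one hb hq.le k) hq.le)
  have hqm : ‖q * q ^ m‖ < 1 := norm_mul_pow_lt_one hq hq.le m
  have ham : ‖a * q ^ m‖ < 1 := norm_mul_pow_lt_one ha hq.le m
  have hpre : z ^ m * (qPochInf (q * q ^ m) q * qPochInf (a * z) q) /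
      (qPochInf q q * qPochInf (a * q ^ m) q) =
      qPochInf (a * z) q / qPochInf a q * (phi10Coeff a q m * z ^ m) := by
    have := qPochFin_ne_zero (mul_pow_ne_one ha hq.le) m
    have := qPochFin_ne_zero (mul_pow_ne_one hq hq.le) m
    have := hne hq m
    have := hne ha m
    rw [qPochInf_eq_qPochFin_mul q hq m, qPochInf_eq_qPochFin_mul a hq m, phi10Coeff]
    field_simp
  rw [hpre, phi21, mul_assoc, ← tsum_mul_left]
  congr 1
  refine tsum_congr fun n => ?_
  rw [qPochInt_natCast hq (hne ham n), qPochInt_natCast hq (hne ha n),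
    qPochInt_natCast hq (hne hq n), qPochInt_natCast hq (hne hqm n),
    phi10Coeff, phi10Coeff, phi10Coeff, add_comm n m, qPochFin_add, qPochFin_add]
  ring

def intProdNatEquiv : ℤ × ℕ ≃ ℕ × ℕ where
  toFun x := if 0 ≤ x.1 then (x.2, x.2 + x.1.natAbs) else (x.2 + x.1.natAbs, x.2)
  invFun y := ((y.2 : ℤ) - y.1, min y.1 y.2)
  left_inv := by
    rintro ⟨k, n⟩
    by_cases hk : 0 ≤ k <;> simp only [hk, ↓reduceIte, Prod.mk.injEq] <;> omega
  right_inv := by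
    rintro ⟨a, b⟩
    by_cases hab : (0 : ℤ) ≤ b - a <;> simp only [hab, ↓reduceIte, Prod.mk.injEq] <;> omega

lemma tsum_int_tsum_mul_add_natAbs {R : Type*} [NormedCommRing R] [CompleteSpace R] {f : ℕ → R}
    (hf : Summable fun n => ‖f n‖) :
    ∑' k : ℤ, ∑' n : ℕ, f n * f (n + k.natAbs) = (∑' n, f n) ^ 2 := by
  have hF := summable_mul_of_summable_norm hf hf
  have hcomp : (fun x : ℕ × ℕ => f x.1 * f x.2) ∘ intProdNatEquiv =
      fun x : ℤ × ℕ => f x.2 * f (x.2 + x.1.natAbs) := by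
    ext ⟨k, n⟩
    by_cases hk : 0 ≤ k <;> simp [intProdNatEquiv, hk, mul_comm]
  have hG : Summable fun x : ℤ × ℕ => f x.2 * f (x.2 + x.1.natAbs) :=
    hcomp ▸ intProdNatEquiv.summable_iff.mpr hF
  rw [← hG.tsum_prod' hG.prod_factor, ← hcomp, Function.comp_def,
    intProdNatEquiv.tsum_eq (fun x : ℕ × ℕ => f x.1 * f x.2), sq,
    tsum_mul_tsum_of_summable_norm hf hf]

lemma mirror_summand_eq {p : ℂ} (hp : ‖p‖ < 1) (k : ℤ) :
    p ^ |k| * (qPochInf (p ^ (3 + 3 * |k|)) (p ^ 3) * qPochInf (p ^ 2) (p ^ 3)) /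
        (qPochInf (p ^ 3) (p ^ 3) * qPochInf (p ^ (1 + 3 * |k|)) (p ^ 3)) *
        phi21 (p ^ (1 + 3 * |k|)) p (p ^ (3 + 3 * |k|)) (p ^ 3) (p ^ 2) =
      qPochInf (p ^ 2) (p ^ 3) / qPochInf p (p ^ 3) *
        ∑' n : ℕ, phi10Coeff p (p ^ 3) n * p ^ n *
          (phi10Coeff p (p ^ 3) (n + k.natAbs) * p ^ (n + k.natAbs)) := by
  have hq : ‖p ^ 3‖ < 1 := by rw [norm_pow]; exact pow_lt_one₀ (norm_nonneg p) hp (by norm_num)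
  have e0 : p ^ |k| = p ^ k.natAbs := by rw [Int.abs_eq_natAbs, zpow_natCast]
  have e1 : p ^ (1 + 3 * |k|) = p * (p ^ 3) ^ k.natAbs := by
    rw [Int.abs_eq_natAbs]; norm_cast; ring
  have e3 : p ^ (3 + 3 * |k|) = p ^ 3 * (p ^ 3) ^ k.natAbs := by
    rw [Int.abs_eq_natAbs]; norm_cast; ring
  rw [e0, e1, e3]
  simpa only [sq] using mul_phi21_eq_tsum_phi10Coeff_mul p p hp hq k.natAbs

theorem sci_mirror_Nf1_general (p : ℂ) (hp1 : ‖p‖ < 1) :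
    (∑' k : ℤ, p ^ |k| *
      (qPochInf (p ^ (3 + 3 * |k|)) (p ^ 3) * qPochInf (p ^ 2) (p ^ 3)) /
      (qPochInf (p ^ 3) (p ^ 3) * qPochInf (p ^ (1 + 3 * |k|)) (p ^ 3)) *
      phi21 (p ^ (1 + 3 * |k|)) p (p ^ (3 + 3 * |k|)) (p ^ 3) (p ^ 2))
    = (qPochInf (p ^ 2) (p ^ 3) / qPochInf p (p ^ 3)) ^ 3 := by
  have hq : ‖p ^ 3‖ < 1 := by rw [norm_pow]; exact pow_lt_one₀ (norm_nonneg p) hp1 (by norm_num)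
  have hsum : ∑' n : ℕ, phi10Coeff p (p ^ 3) n * p ^ n =
      qPochInf (p ^ 2) (p ^ 3) / qPochInf p (p ^ 3) := by
    rw [sq]
    exact phi10_eq_qPochInf_div p hq hp1
  rw [tsum_congr (mirror_summand_eq hp1), tsum_mul_left,
    tsum_int_tsum_mul_add_natAbs (summable_norm_phi10Coeff_mul_pow p hq hp1), hsum]
  ring

theorem sci_mirror_Nf1 (p : ℂ) (hp0 : 0 < ‖p‖) (hp1 : ‖p‖ < 1) :
    (∑' k : ℤ, p ^ |k| *
      (qPochInf (p ^ (3 + 3 * |k|)) (p ^ 3) * qPochInf (p ^ 2) (p ^ 3)) /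
      (qPochInf (p ^ 3) (p ^ 3) * qPochInf (p ^ (1 + 3 * |k|)) (p ^ 3)) *
      phi21 (p ^ (1 + 3 * |k|)) p (p ^ (3 + 3 * |k|)) (p ^ 3) (p ^ 2))
    = (qPochInf (p ^ 2) (p ^ 3) / qPochInf p (p ^ 3)) ^ 3 :=
  sci_mirror_Nf1_general p hp1
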